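/- arXiv:2012.06138 — 3 statements merged into one kernel-verified Lean document; each statement's English description precedes it below -/
import Mathlib

section
/- (Unbiasedness of the advantage-based policy gradient) With independent categorical components a_i as above and advantage A_i(a) = R(a) − R(a_{[a_i→0]}), where a_{[a_i→0]} denotes a with the i-th component replaced by the zero vector, one has E_a[A_i(a)(a_i − μ_i(θ_i))] = E_a[R(a)(a_i − μ_i(θ_i))] = ∇_{θ_i} E_a[R(a)]. -/
open Finset

/-- Softmax parameterization of a categorical distribution. -/
noncomputable def softmax {n : ℕ} (θ : Fin n → ℝ) (j : Fin n) : ℝ :=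
  Real.exp (θ j) / ∑ k, Real.exp (θ k)

/-- One-hot (standard basis) vector `e_j ∈ ℝ^n`. -/
def oneHot {n : ℕ} (j : Fin n) : Fin n → ℝ := fun k => if k = j then 1 else 0

/-- Probability of a tuple of categories under the product of softmax
categorical distributions. -/
noncomputable def prodProb {m : ℕ} {n : Fin m → ℕ}
    (θ : ∀ i, Fin (n i) → ℝ) (a : ∀ i, Fin (n i)) : ℝ :=
  ∏ k, softmax (θ k) (a k)

/-- The tuple of one-hot vectors corresponding to a tuple of categories. -/
def oneHotTuple {m : ℕ} {n : Fin m → ℕ} (a : ∀ i, Fin (n i)) :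
    ∀ i, Fin (n i) → ℝ := fun i => oneHot (a i)

lemma expsum_pos {n : ℕ} (θ : Fin n → ℝ) (j : Fin n) : 0 < ∑ k, Real.exp (θ k) :=
  Finset.sum_pos (fun k _ => Real.exp_pos _) ⟨j, mem_univ j⟩

lemma sum_softmax {n : ℕ} (θ : Fin n → ℝ) (j : Fin n) : ∑ k, softmax θ k = 1 := by
  unfold softmax
  rw [← Finset.sum_div, div_self (expsum_pos θ j).ne']

/-- first moment identity, componentwise. -/
lemma moment_zero {n : ℕ} (φ : Fin n → ℝ) (j : Fin n) :
    ∑ x : Fin n, softmax φ x * ((oneHot x - softmax φ) j) = 0 := by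
  have h1 : ∑ x : Fin n, softmax φ x * oneHot x j = softmax φ j := by
    rw [Finset.sum_eq_single j]
    · simp [oneHot]
    · intro b _ hb
      simp [oneHot, Ne.symm hb]
    · simp
  have : ∑ x : Fin n, softmax φ x * ((oneHot x - softmax φ) j)
      = (∑ x : Fin n, softmax φ x * oneHot x j)
        - (∑ x : Fin n, softmax φ x) * softmax φ j := by
    rw [Finset.sum_mul, ← Finset.sum_sub_distrib]
    congr 1 with x
    simp [Pi.sub_apply]
    ring
  rcases n with _ | n
  · exact Fin.elim0 j
  rw [this, h1, sum_softmax φ j, one_mul, sub_self]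

/-- key derivative of softmax in one coordinate of the parameter -/
lemma hasDerivAt_softmax {n : ℕ} (φ : Fin n → ℝ) (j l : Fin n) :
    HasDerivAt (fun t => softmax (Function.update φ j t) l)
      (softmax φ l * ((if l = j then 1 else 0) - softmax φ j)) (φ j) := by
  have hfun : ∀ t, softmax (Function.update φ j t) l
      = (if l = j then Real.exp t else Real.exp (φ l))
        / (Real.exp t + ∑ k ∈ univ.erase j, Real.exp (φ k)) := by
    intro t
    unfold softmax
    congr 1
    · rw [Function.update_apply, apply_ite Real.exp]
    · have : (fun k => Real.exp (Function.update φ j t k))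
          = Function.update (fun k => Real.exp (φ k)) j (Real.exp t) := by
        funext k
        rw [Function.update_apply, Function.update_apply, apply_ite Real.exp]
      rw [show (∑ k, Real.exp (Function.update φ j t k)) = ∑ k, Function.update (fun k => Real.exp (φ k)) j (Real.exp t) k by rw [this]]
      rw [Finset.sum_update_of_mem (mem_univ j), Finset.sdiff_singleton_eq_erase]
  set C := ∑ k ∈ univ.erase j, Real.exp (φ k) with hC
  have hCpos : 0 ≤ C := Finset.sum_nonneg fun k _ => (Real.exp_pos _).le
  have hD : ∀ t : ℝ, Real.exp t + C ≠ 0 := fun t => by positivity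
  have hT : Real.exp (φ j) + C = ∑ k, Real.exp (φ k) := by
    rw [hC]
    exact Finset.add_sum_erase univ (fun k => Real.exp (φ k)) (mem_univ j)
  have hN : HasDerivAt (fun t => if l = j then Real.exp t else Real.exp (φ l))
      (if l = j then Real.exp (φ j) else 0) (φ j) := by
    by_cases h : l = j
    · simpa [h] using Real.hasDerivAt_exp (φ j)
    · simpa [h] using hasDerivAt_const (φ j) (Real.exp (φ l))
  have hDd : HasDerivAt (fun t => Real.exp t + C) (Real.exp (φ j)) (φ j) := by
    simpa using (Real.hasDerivAt_exp (φ j)).add_const C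
  have := hN.div hDd (hD (φ j))
  have heq : (fun t => (if l = j then Real.exp t else Real.exp (φ l)) / (Real.exp t + C))
      = fun t => softmax (Function.update φ j t) l := by
    funext t; rw [hfun t]
  change HasDerivAt (fun t => (if l = j then Real.exp t else Real.exp (φ l)) / (Real.exp t + C)) _ _ at this
  rw [heq] at this
  convert this using 1
  have hTpos : (0:ℝ) < ∑ k, Real.exp (φ k) := expsum_pos φ j
  unfold softmax
  rw [hT]
  by_cases h : l = j
  · subst h
    simp only [if_true]
    field_simp
  · simp only [h, if_false]
    ring

lemma moment_zero' {n : ℕ} (φ : Fin n → ℝ) :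
    ∑ x : Fin n, softmax φ x • (oneHot x - softmax φ) = (0 : Fin n → ℝ) := by
  funext j
  rw [Finset.sum_apply]
  simpa [Pi.smul_apply, smul_eq_mul] using moment_zero φ j

lemma prod_update_softmax {m : ℕ} {n : Fin m → ℕ}
    (θ : ∀ i, Fin (n i) → ℝ) (i : Fin m) (ψ : Fin (n i) → ℝ) (a : ∀ k, Fin (n k)) :
    ∏ k, softmax (Function.update θ i ψ k) (a k)
      = softmax ψ (a i) * ∏ k ∈ univ.erase i, softmax (θ k) (a k) := by
  have h : (fun k => softmax (Function.update θ i ψ k) (a k))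
      = Function.update (fun k => softmax (θ k) (a k)) i (softmax ψ (a i)) := by
    funext k
    by_cases hk : k = i
    · subst hk; simp
    · simp [Function.update_of_ne hk]
  rw [show (∏ k, softmax (Function.update θ i ψ k) (a k))
      = ∏ k, Function.update (fun k => softmax (θ k) (a k)) i (softmax ψ (a i)) k by rw [h]]
  rw [Finset.prod_update_of_mem (mem_univ i), Finset.sdiff_singleton_eq_erase]

lemma prodProb_split {m : ℕ} {n : Fin m → ℕ}
    (θ : ∀ i, Fin (n i) → ℝ) (i : Fin m) (a : ∀ k, Fin (n k)) :
    prodProb θ a = softmax (θ i) (a i) * ∏ k ∈ univ.erase i, softmax (θ k) (a k) := by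
  have := prod_update_softmax θ i (θ i) a
  simpa [Function.update_eq_self, prodProb] using this


/-- Unbiasedness of the advantage-based policy gradient: with
independent softmax-categorical one-hot components `a_i`, and advantage
`A_i(a) = R(a) − R(a_{[a_i→0]})` (the `i`-th component replaced by the zero
vector), one has `E[A_i(a)(a_i − μ_i)] = E[R(a)(a_i − μ_i)]`, and this equals
the gradient `∇_{θ_i} E_a[R(a)]` (stated componentwise for each `j`). -/
theorem advantage_nas_stmt5 {m : ℕ} {n : Fin m → ℕ}
    (θ : ∀ i, Fin (n i) → ℝ) (R : (∀ i, Fin (n i) → ℝ) → ℝ) (i : Fin m) :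
    ((∑ a : ∀ k, Fin (n k),
        (prodProb θ a * (R (oneHotTuple a) -
            R (Function.update (oneHotTuple a) i 0))) •
          (oneHot (a i) - softmax (θ i)))
      = ∑ a : ∀ k, Fin (n k),
          (prodProb θ a * R (oneHotTuple a)) • (oneHot (a i) - softmax (θ i))) ∧
    (∀ j : Fin (n i),
      HasDerivAt
        (fun t : ℝ => ∑ a : ∀ k, Fin (n k),
          prodProb (Function.update θ i (Function.update (θ i) j t)) a *
            R (oneHotTuple a))
        (∑ a : ∀ k, Fin (n k),
          (prodProb θ a * R (oneHotTuple a)) *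
            ((oneHot (a i) - softmax (θ i)) j))
        (θ i j)) := by
  set μ := softmax (θ i) with hμ
  set B : (∀ k, Fin (n k)) → ℝ := fun a => R (Function.update (oneHotTuple a) i 0) with hB
  set P : (∀ k, Fin (n k)) → ℝ := fun a => ∏ k ∈ univ.erase i, softmax (θ k) (a k) with hP
  constructor
  · -- Part 1
    have hbase : ∑ a : ∀ k, Fin (n k),
        (prodProb θ a * B a) • (oneHot (a i) - μ) = 0 := by
      set F : (∀ k, Fin (n k)) → (Fin (n i) → ℝ) :=
        fun a => (prodProb θ a * B a) • (oneHot (a i) - μ) with hF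
      have step1 : ∑ a : ∀ k, Fin (n k), F a
          = ∑ p : (∀ k, Fin (n k)) × Fin (n i), softmax (θ i) p.2 • F p.1 := by
        rw [Fintype.sum_prod_type]
        refine Finset.sum_congr rfl fun a _ => ?_
        dsimp only
        rw [← Finset.sum_smul, sum_softmax (θ i) (a i), one_smul]
      have hinv : Function.Involutive
          (fun p : (∀ k, Fin (n k)) × Fin (n i) => (Function.update p.1 i p.2, p.1 i)) := by
        intro p
        simp [Function.update_idem, Function.update_eq_self]
      have step2 : ∑ p : (∀ k, Fin (n k)) × Fin (n i), softmax (θ i) p.2 • F p.1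
          = ∑ p : (∀ k, Fin (n k)) × Fin (n i),
              softmax (θ i) (p.1 i) • F (Function.update p.1 i p.2) :=
        (Fintype.sum_bijective _ hinv.bijective _ _ (fun p => rfl)).symm
      have hFupd : ∀ (a : ∀ k, Fin (n k)) (x : Fin (n i)),
          F (Function.update a i x) = (softmax (θ i) x * (P a * B a)) • (oneHot x - μ) := by
        intro a x
        have hPa : prodProb (fun k => θ k) (Function.update a i x)
            = softmax (θ i) x * P a := by
          rw [prodProb_split θ i (Function.update a i x), Function.update_self]
          congr 1
          refine Finset.prod_congr rfl fun k hk => ?_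
          rw [Function.update_of_ne (Finset.ne_of_mem_erase hk)]
        have hBa : B (Function.update a i x) = B a := by
          simp only [hB]
          congr 1
          funext k
          by_cases hk : k = i
          · subst hk; simp
          · simp only [Function.update_of_ne hk, oneHotTuple, Function.update_of_ne hk]
        simp only [hF, hPa, hBa, Function.update_self]
        ring_nf
      have step3 : ∑ p : (∀ k, Fin (n k)) × Fin (n i),
            softmax (θ i) (p.1 i) • F (Function.update p.1 i p.2) = 0 := by
        rw [Fintype.sum_prod_type]
        refine Finset.sum_eq_zero fun a _ => ?_
        have : ∑ x : Fin (n i), softmax (θ i) (a i) • F (Function.update a i x)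
            = (softmax (θ i) (a i) * (P a * B a)) •
                ∑ x : Fin (n i), softmax (θ i) x • (oneHot x - μ) := by
          rw [Finset.smul_sum]
          refine Finset.sum_congr rfl fun x _ => ?_
          rw [hFupd a x, smul_smul, smul_smul]
          congr 1
          ring
        rw [this, hμ, moment_zero', smul_zero]
      rw [step1, step2, step3]
    calc ∑ a : ∀ k, Fin (n k),
        (prodProb θ a * (R (oneHotTuple a) - B a)) • (oneHot (a i) - μ)
        = ∑ a : ∀ k, Fin (n k),
            ((prodProb θ a * R (oneHotTuple a)) • (oneHot (a i) - μ)
              - (prodProb θ a * B a) • (oneHot (a i) - μ)) := by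
          refine Finset.sum_congr rfl fun a _ => ?_
          rw [mul_sub, sub_smul]
      _ = _ := by
          rw [Finset.sum_sub_distrib, hbase, sub_zero]
  · -- Part 2
    intro j
    have key : ∀ a : ∀ k, Fin (n k),
        HasDerivAt
          (fun t : ℝ => prodProb (Function.update θ i (Function.update (θ i) j t)) a *
            R (oneHotTuple a))
          ((prodProb θ a * R (oneHotTuple a)) * ((oneHot (a i) - μ) j)) (θ i j) := by
      intro a
      have hfun : (fun t : ℝ => prodProb (Function.update θ i (Function.update (θ i) j t)) a *
            R (oneHotTuple a))
          = fun t : ℝ => softmax (Function.update (θ i) j t) (a i) * (P a * R (oneHotTuple a)) := by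
        funext t
        rw [prodProb, prod_update_softmax θ i (Function.update (θ i) j t) a]
        ring
      rw [hfun]
      have h := (hasDerivAt_softmax (θ i) j (a i)).mul_const (P a * R (oneHotTuple a))
      refine h.congr_deriv ?_
      rw [prodProb_split θ i a]
      have hone : (oneHot (a i) - μ) j = (if a i = j then 1 else 0) - μ j := by
        simp [oneHot, Pi.sub_apply, eq_comm]
      rw [hone]
      ring
    exact HasDerivAt.fun_sum fun a _ => key a
end

section
/- (Expected improvement lower bound, Theorem 1) Let J(θ) = E_{a∼p_θ}[R(a)] with R(a) > 0 for all a in a finite set A, where p_θ is the product of independent softmax-categorical distributions. Let δ be a random vector with E[δ] = ∇_θ J(θ). Then for any ε > 0: E_δ[log J(θ + εδ)] − log J(θ) ≥ (ε/J(θ) − ε²/2) ∥∇_θ J(θ)∥² − (ε²/2) Var[δ], where Var[δ] = E[∥δ∥²] − ∥E[δ]∥² and, as in the paper's statement, the bound may be written as (ε/J(θ)) ∥∇J∥² − (ε²/2) E[∥δ∥²]. -/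
open Finset

/-- Expected reward under the product of independent softmax-categorical
distributions. -/
noncomputable def expReward {m : ℕ} {n : Fin m → ℕ}
    (R : (∀ i, Fin (n i)) → ℝ) (θ : ∀ i, Fin (n i) → ℝ) : ℝ :=
  ∑ a : ∀ i, Fin (n i), (∏ k, softmax (θ k) (a k)) * R a

namespace Stmt11Aux
variable {N : ℕ}

lemma Zpos [NeZero N] (v : Fin N → ℝ) : 0 < ∑ k, Real.exp (v k) :=
  Finset.sum_pos (fun k _ => Real.exp_pos _) (by simp [Finset.univ_nonempty])

lemma softmax_pos [NeZero N] (v : Fin N → ℝ) (j : Fin N) : 0 < softmax v j :=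
  div_pos (Real.exp_pos _) (Zpos v)

lemma softmax_le_one [NeZero N] (v : Fin N → ℝ) (j : Fin N) : softmax v j ≤ 1 := by
  rw [softmax, div_le_one (Zpos v)]
  exact Finset.single_le_sum (fun k _ => (Real.exp_pos _).le) (Finset.mem_univ j)

lemma sum_softmax [NeZero N] (v : Fin N → ℝ) : ∑ j, softmax v j = 1 := by
  simp only [softmax]
  rw [← Finset.sum_div]
  exact div_self (Zpos v).ne'

lemma hasDerivAt_exp_line (v d : Fin N → ℝ) (k : Fin N) (t : ℝ) :
    HasDerivAt (fun s => Real.exp (v k + s * d k)) (Real.exp (v k + t * d k) * d k) t := by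
  have h : HasDerivAt (fun s : ℝ => v k + s * d k) (d k) t := by
    simpa using ((hasDerivAt_mul_const (d k)).const_add (v k))
  simpa using h.exp

lemma hasDerivAt_Z_line (v d : Fin N → ℝ) (t : ℝ) :
    HasDerivAt (fun s => ∑ k, Real.exp (v k + s * d k))
      (∑ k, Real.exp (v k + t * d k) * d k) t :=
  HasDerivAt.fun_sum (fun k _ => hasDerivAt_exp_line v d k t)

lemma softmax_line_apply (v d : Fin N → ℝ) (s : ℝ) (j : Fin N) :
    softmax (v + s • d) j = Real.exp (v j + s * d j) / ∑ k, Real.exp (v k + s * d k) := by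
  simp [softmax]

lemma sum_softmax_mul_line (v d : Fin N → ℝ) (t : ℝ) :
    ∑ k, softmax (v + t • d) k * d k
      = (∑ k, Real.exp (v k + t * d k) * d k) / ∑ k, Real.exp (v k + t * d k) := by
  simp only [softmax_line_apply, div_mul_eq_mul_div, ← Finset.sum_div]

lemma hasDerivAt_softmax_line [NeZero N] (v d : Fin N → ℝ) (j : Fin N) (t : ℝ) :
    HasDerivAt (fun s => softmax (v + s • d) j)
      (softmax (v + t • d) j * (d j - ∑ k, softmax (v + t • d) k * d k)) t := by
  have hZ : (0:ℝ) < ∑ k, Real.exp (v k + t * d k) := by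
    have := Zpos (v + t • d); simpa [Pi.add_apply] using this
  have h := (hasDerivAt_exp_line v d j t).fun_div (hasDerivAt_Z_line v d t) hZ.ne'
  have heq : (fun s => Real.exp (v j + s * d j) / ∑ k, Real.exp (v k + s * d k))
      = fun s => softmax (v + s • d) j := by
    funext s; rw [softmax_line_apply]
  rw [heq] at h
  refine h.congr_deriv ?_
  rw [softmax_line_apply, sum_softmax_mul_line]
  field_simp

-- derivative of the log-partition along a line
lemma hasDerivAt_lse_line [NeZero N] (v d : Fin N → ℝ) (t : ℝ) :
    HasDerivAt (fun s => Real.log (∑ k, Real.exp (v k + s * d k)))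
      (∑ k, softmax (v + t • d) k * d k) t := by
  have hZ : (0:ℝ) < ∑ k, Real.exp (v k + t * d k) := by
    have := Zpos (v + t • d); simpa [Pi.add_apply] using this
  have h := (hasDerivAt_Z_line v d t).log hZ.ne'
  rw [sum_softmax_mul_line]
  exact h

-- derivative of s ↦ ∑ softmax(v+s d) k * d k
lemma hasDerivAt_h_line [NeZero N] (v d : Fin N → ℝ) (t : ℝ) :
    HasDerivAt (fun s => ∑ k, softmax (v + s • d) k * d k)
      (∑ k, softmax (v + t • d) k * (d k - ∑ l, softmax (v + t • d) l * d l) * d k) t :=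
  HasDerivAt.fun_sum (fun k _ => (hasDerivAt_softmax_line v d k t).mul_const (d k))

lemma h_deriv_le [NeZero N] (v d : Fin N → ℝ) (t : ℝ) :
    (∑ k, softmax (v + t • d) k * (d k - ∑ l, softmax (v + t • d) l * d l) * d k)
      ≤ ∑ k, d k ^ 2 := by
  set μ := fun k => softmax (v + t • d) k with hμ
  set S := ∑ l, μ l * d l with hS
  have h1 : ∀ k, μ k * (d k - S) * d k = μ k * d k ^ 2 - (μ k * d k) * S := by
    intro k; ring
  rw [Finset.sum_congr rfl (fun k _ => h1 k), Finset.sum_sub_distrib, ← Finset.sum_mul, ← hS]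
  have h2 : (∑ k, μ k * d k ^ 2) ≤ ∑ k, d k ^ 2 := by
    apply Finset.sum_le_sum
    intro k _
    have := softmax_le_one (v + t • d) k
    have h0 := (softmax_pos (v + t • d) k).le
    nlinarith [sq_nonneg (d k)]
  nlinarith [sq_nonneg S]

-- key smoothness inequality
lemma lse_smooth [NeZero N] (v d : Fin N → ℝ) :
    Real.log (∑ k, Real.exp (v k + d k)) - Real.log (∑ k, Real.exp (v k))
      ≤ (∑ j, softmax v j * d j) + (1/2) * ∑ j, d j ^ 2 := by
  have hG : ∀ x : ℝ, HasDerivAt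
      (fun s => s * (∑ j, d j ^ 2) - ∑ k, softmax (v + s • d) k * d k)
      ((∑ j, d j ^ 2) -
        ∑ k, softmax (v + x • d) k * (d k - ∑ l, softmax (v + x • d) l * d l) * d k) x :=
    fun x => (hasDerivAt_mul_const _).sub (hasDerivAt_h_line v d x)
  -- step 1 : h s - h 0 ≤ s * D2 for s ≥ 0
  have hmono : MonotoneOn
      (fun s => s * (∑ j, d j ^ 2) - ∑ k, softmax (v + s • d) k * d k) (Set.Ici 0) := by
    apply monotoneOn_of_deriv_nonneg (convex_Ici 0)
    · exact (Differentiable.continuous (fun x => (hG x).differentiableAt)).continuousOn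
    · exact fun x _ => (hG x).differentiableAt.differentiableWithinAt
    · intro x _
      rw [(hG x).deriv, sub_nonneg]
      exact h_deriv_le v d x
  have hstep1 : ∀ s : ℝ, 0 ≤ s →
      (∑ k, softmax (v + s • d) k * d k) - (∑ k, softmax v k * d k)
        ≤ s * ∑ j, d j ^ 2 := by
    intro s hs
    have := hmono Set.self_mem_Ici hs hs
    simp only [zero_mul, zero_smul, add_zero, zero_sub] at this
    linarith
  -- step 2 : ψ is antitone on [0,1]
  have hψ : ∀ x : ℝ, HasDerivAt
      (fun s => Real.log (∑ k, Real.exp (v k + s * d k))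
        - s * (∑ k, softmax v k * d k) - s ^ 2 / 2 * ∑ j, d j ^ 2)
      ((∑ k, softmax (v + x • d) k * d k) - (∑ k, softmax v k * d k)
        - x * ∑ j, d j ^ 2) x := by
    intro x
    have h2 : HasDerivAt (fun s : ℝ => s ^ 2 / 2 * ∑ j, d j ^ 2)
        (x * ∑ j, d j ^ 2) x := by
      have := ((hasDerivAt_pow 2 x).div_const 2).mul_const (∑ j, d j ^ 2)
      simpa using this
    exact ((hasDerivAt_lse_line v d x).sub (hasDerivAt_mul_const _)).sub h2
  have hanti : AntitoneOn
      (fun s => Real.log (∑ k, Real.exp (v k + s * d k))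
        - s * (∑ k, softmax v k * d k) - s ^ 2 / 2 * ∑ j, d j ^ 2) (Set.Icc 0 1) := by
    apply antitoneOn_of_deriv_nonpos (convex_Icc 0 1)
    · exact (Differentiable.continuous (fun x => (hψ x).differentiableAt)).continuousOn
    · exact fun x _ => (hψ x).differentiableAt.differentiableWithinAt
    · intro x hx
      rw [(hψ x).deriv, sub_nonpos]
      exact hstep1 x (interior_subset hx).1
  have := hanti (Set.mem_Icc.mpr ⟨le_refl 0, zero_le_one⟩)
    (Set.mem_Icc.mpr ⟨zero_le_one, le_refl 1⟩) zero_le_one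
  norm_num at this
  linarith

lemma update_eq_line (v : Fin N → ℝ) (j : Fin N) (t : ℝ) :
    Function.update v j t = v + (t - v j) • (Pi.single j 1 : Fin N → ℝ) := by
  funext k
  by_cases h : k = j
  · subst h; simp
  · simp [Function.update_of_ne h, Pi.single_eq_of_ne h]

lemma hasDerivAt_softmax_update [NeZero N] (v : Fin N → ℝ) (j l : Fin N) :
    HasDerivAt (fun t => softmax (Function.update v j t) l)
      (softmax v l * ((if l = j then (1:ℝ) else 0) - softmax v j)) (v j) := by
  have h := hasDerivAt_softmax_line v (Pi.single j 1 : Fin N → ℝ) l 0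
  have hc : HasDerivAt (fun t : ℝ => t - v j) 1 (v j) := by
    simpa using (hasDerivAt_id (v j)).sub_const (v j)
  have h2 := HasDerivAt.comp (v j) (by simpa using h) hc
  have heq : ((fun s => softmax (v + s • (Pi.single j 1 : Fin N → ℝ)) l) ∘ fun t => t - v j)
      = fun t => softmax (Function.update v j t) l := by
    funext t
    simp only [Function.comp_apply]
    rw [update_eq_line]
  rw [heq] at h2
  refine h2.congr_deriv ?_
  have hs : ∑ k, softmax v k * (Pi.single j 1 : Fin N → ℝ) k = softmax v j := by
    rw [Finset.sum_eq_single j]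
    · simp
    · intro k _ hk; simp [Pi.single_eq_of_ne hk]
    · simp
  rw [hs]
  have : (Pi.single j 1 : Fin N → ℝ) l = if l = j then 1 else 0 := by
    by_cases h : l = j
    · subst h; simp
    · simp [Pi.single_eq_of_ne h, h]
  rw [this]
  ring

end Stmt11Aux

open Stmt11Aux

namespace Stmt11Aux2

variable {m : ℕ} {n : Fin m → ℕ}

lemma prod_update (θ : ∀ i, Fin (n i) → ℝ) (i : Fin m) (w : Fin (n i) → ℝ)
    (a : ∀ i, Fin (n i)) :
    ∏ k, softmax (Function.update θ i w k) (a k)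
      = softmax w (a i) * ∏ k ∈ Finset.univ.erase i, softmax (θ k) (a k) := by
  rw [← Finset.mul_prod_erase Finset.univ _ (Finset.mem_univ i)]
  congr 1
  · simp
  · refine Finset.prod_congr rfl (fun k hk => ?_)
    rw [Function.update_of_ne (Finset.ne_of_mem_erase hk)]

lemma prod_self (θ : ∀ i, Fin (n i) → ℝ) (i : Fin m) (a : ∀ i, Fin (n i)) :
    ∏ k, softmax (θ k) (a k)
      = softmax (θ i) (a i) * ∏ k ∈ Finset.univ.erase i, softmax (θ k) (a k) :=
  (Finset.mul_prod_erase Finset.univ _ (Finset.mem_univ i)).symm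

lemma hasDerivAt_expReward_update (hn : ∀ i, 0 < n i)
    (R : (∀ i, Fin (n i)) → ℝ) (θ : ∀ i, Fin (n i) → ℝ) (i : Fin m) (j : Fin (n i)) :
    HasDerivAt (fun t => expReward R (Function.update θ i (Function.update (θ i) j t)))
      (∑ a : ∀ i, Fin (n i), (∏ k, softmax (θ k) (a k)) * R a *
        ((if a i = j then (1:ℝ) else 0) - softmax (θ i) j)) (θ i j) := by
  haveI : ∀ i, NeZero (n i) := fun i => ⟨(hn i).ne'⟩
  have heq : (fun t => expReward R (Function.update θ i (Function.update (θ i) j t)))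
      = fun t => ∑ a : ∀ i, Fin (n i),
          softmax (Function.update (θ i) j t) (a i) *
            (∏ k ∈ Finset.univ.erase i, softmax (θ k) (a k)) * R a := by
    funext t
    unfold expReward
    refine Finset.sum_congr rfl (fun a _ => ?_)
    rw [prod_update, mul_assoc]
  rw [heq]
  have h := HasDerivAt.fun_sum (u := (Finset.univ : Finset (∀ i, Fin (n i))))
    (fun a (_ : a ∈ Finset.univ) =>
      ((hasDerivAt_softmax_update (θ i) j (a i)).mul_const
        (∏ k ∈ Finset.univ.erase i, softmax (θ k) (a k))).mul_const (R a))
  refine h.congr_deriv ?_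
  refine Finset.sum_congr rfl (fun a _ => ?_)
  rw [prod_self θ i a]
  ring

lemma grad_eq (hn : ∀ i, 0 < n i)
    (R : (∀ i, Fin (n i)) → ℝ) (θ g : ∀ i, Fin (n i) → ℝ)
    (hgrad : ∀ (i : Fin m) (j : Fin (n i)),
      HasDerivAt
        (fun t : ℝ => expReward R (Function.update θ i (Function.update (θ i) j t)))
        (g i j) (θ i j)) (i : Fin m) (j : Fin (n i)) :
    g i j = ∑ a : ∀ i, Fin (n i), (∏ k, softmax (θ k) (a k)) * R a *
        ((if a i = j then (1:ℝ) else 0) - softmax (θ i) j) :=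
  (hgrad i j).unique (hasDerivAt_expReward_update hn R θ i j)


lemma prod_softmax_pos (hn : ∀ i, 0 < n i) (θ : ∀ i, Fin (n i) → ℝ)
    (a : ∀ i, Fin (n i)) :
    0 < ∏ k, softmax (θ k) (a k) := by
  haveI : ∀ i, NeZero (n i) := fun i => ⟨(hn i).ne'⟩
  exact Finset.prod_pos (fun k _ => softmax_pos (θ k) (a k))

lemma expReward_pos (hn : ∀ i, 0 < n i) (R : (∀ i, Fin (n i)) → ℝ)
    (hR : ∀ a, 0 < R a) (θ : ∀ i, Fin (n i) → ℝ) :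
    0 < expReward R θ := by
  haveI : ∀ i, NeZero (n i) := fun i => ⟨(hn i).ne'⟩
  haveI : ∀ i, Nonempty (Fin (n i)) := fun i => ⟨⟨0, hn i⟩⟩
  exact Finset.sum_pos
    (fun a _ => mul_pos (prod_softmax_pos hn θ a) (hR a))
    (by simp [Finset.univ_nonempty])

lemma jensen (hn : ∀ i, 0 < n i) (R : (∀ i, Fin (n i)) → ℝ) (hR : ∀ a, 0 < R a)
    (θ θ' : ∀ i, Fin (n i) → ℝ) :
    ∑ a : ∀ i, Fin (n i),
        ((∏ k, softmax (θ k) (a k)) * R a / expReward R θ) *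
          (Real.log (∏ k, softmax (θ' k) (a k)) - Real.log (∏ k, softmax (θ k) (a k)))
      ≤ Real.log (expReward R θ') - Real.log (expReward R θ) := by
  haveI : ∀ i, NeZero (n i) := fun i => ⟨(hn i).ne'⟩
  set J := expReward R θ with hJdef
  have hJ : 0 < J := expReward_pos hn R hR θ
  have hP : ∀ a : ∀ i, Fin (n i), 0 < ∏ k, softmax (θ k) (a k) :=
    prod_softmax_pos hn θ
  have hP' : ∀ a : ∀ i, Fin (n i), 0 < ∏ k, softmax (θ' k) (a k) :=
    prod_softmax_pos hn θ'
  set q : (∀ i, Fin (n i)) → ℝ := fun a => (∏ k, softmax (θ k) (a k)) * R a / J with hq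
  set x : (∀ i, Fin (n i)) → ℝ :=
    fun a => J * (∏ k, softmax (θ' k) (a k)) / (∏ k, softmax (θ k) (a k)) with hx
  have hq0 : ∀ a ∈ Finset.univ (α := ∀ i, Fin (n i)), 0 ≤ q a :=
    fun a _ => le_of_lt (div_pos (mul_pos (hP a) (hR a)) hJ)
  have hq1 : ∑ a : ∀ i, Fin (n i), q a = 1 := by
    simp only [hq]
    rw [← Finset.sum_div]
    exact div_self hJ.ne'
  have hxmem : ∀ a ∈ Finset.univ (α := ∀ i, Fin (n i)), x a ∈ Set.Ioi (0:ℝ) :=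
    fun a _ => div_pos (mul_pos hJ (hP' a)) (hP a)
  have key := (strictConcaveOn_log_Ioi.concaveOn).le_map_sum hq0 hq1 hxmem
  have hqx : ∑ a : ∀ i, Fin (n i), q a • x a = expReward R θ' := by
    unfold expReward
    refine Finset.sum_congr rfl (fun a _ => ?_)
    have h1 : (∏ k, softmax (θ k) (a k)) ≠ 0 := (hP a).ne'
    have h2 : J ≠ 0 := hJ.ne'
    rw [hq, hx, smul_eq_mul]
    field_simp
  rw [hqx] at key
  have hlogx : ∀ a : ∀ i, Fin (n i), Real.log (x a)
      = Real.log J + (Real.log (∏ k, softmax (θ' k) (a k))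
          - Real.log (∏ k, softmax (θ k) (a k))) := by
    intro a
    rw [hx]
    rw [Real.log_div (mul_pos hJ (hP' a)).ne' (hP a).ne',
      Real.log_mul hJ.ne' (hP' a).ne']
    ring
  have hsplit : ∑ a : ∀ i, Fin (n i), q a • Real.log (x a)
      = Real.log J + ∑ a : ∀ i, Fin (n i), q a *
          (Real.log (∏ k, softmax (θ' k) (a k)) - Real.log (∏ k, softmax (θ k) (a k))) := by
    have hterm : ∀ a : ∀ i, Fin (n i), q a • Real.log (x a)
        = Real.log J * q a + q a *
            (Real.log (∏ k, softmax (θ' k) (a k)) - Real.log (∏ k, softmax (θ k) (a k))) := by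
      intro a
      rw [smul_eq_mul, hlogx a]
      ring
    rw [Finset.sum_congr rfl (fun a _ => hterm a), Finset.sum_add_distrib,
      ← Finset.mul_sum, hq1, mul_one]
  rw [hsplit] at key
  linarith [key]

-- the pointwise improvement bound
lemma pointwise (hn : ∀ i, 0 < n i) (R : (∀ i, Fin (n i)) → ℝ) (hR : ∀ a, 0 < R a)
    (θ : ∀ i, Fin (n i) → ℝ)
    (g : ∀ i, Fin (n i) → ℝ)
    (hg : ∀ (i : Fin m) (j : Fin (n i)), g i j
      = ∑ a : ∀ i, Fin (n i), (∏ k, softmax (θ k) (a k)) * R a *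
          ((if a i = j then (1:ℝ) else 0) - softmax (θ i) j))
    (d : ∀ i, Fin (n i) → ℝ) :
    Real.log (expReward R (θ + d)) - Real.log (expReward R θ) ≥
      (1 / expReward R θ) * (∑ i, ∑ j, d i j * g i j)
        - (1/2) * ∑ i, ∑ j, (d i j) ^ 2 := by
  haveI : ∀ i, NeZero (n i) := fun i => ⟨(hn i).ne'⟩
  set J := expReward R θ with hJdef
  have hJ : 0 < J := expReward_pos hn R hR θ
  set q : (∀ i, Fin (n i)) → ℝ := fun a => (∏ k, softmax (θ k) (a k)) * R a / J with hq
  have hq1 : ∑ a : ∀ i, Fin (n i), q a = 1 := by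
    simp only [hq]
    rw [← Finset.sum_div]
    exact div_self hJ.ne'
  -- log of the product of softmaxes
  have hlogP : ∀ (ψ : ∀ i, Fin (n i) → ℝ) (a : ∀ i, Fin (n i)),
      Real.log (∏ k, softmax (ψ k) (a k))
        = ∑ i, (ψ i (a i) - Real.log (∑ k, Real.exp (ψ i k))) := by
    intro ψ a
    rw [Real.log_prod (fun k _ => (softmax_pos (ψ k) (a k)).ne')]
    refine Finset.sum_congr rfl (fun i _ => ?_)
    rw [softmax, Real.log_div (Real.exp_pos _).ne' (Zpos (ψ i)).ne', Real.log_exp]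
  have hratio : ∀ a : ∀ i, Fin (n i),
      Real.log (∏ k, softmax ((θ + d) k) (a k)) - Real.log (∏ k, softmax (θ k) (a k))
        = ∑ i, (d i (a i)
            - (Real.log (∑ k, Real.exp (θ i k + d i k))
                - Real.log (∑ k, Real.exp (θ i k)))) := by
    intro a
    rw [hlogP (θ + d) a, hlogP θ a, ← Finset.sum_sub_distrib]
    refine Finset.sum_congr rfl (fun i _ => ?_)
    simp only [Pi.add_apply]
    ring
  -- Q identity
  have hQ : ∀ (i : Fin m) (j : Fin (n i)),
      ∑ a : ∀ i, Fin (n i), q a * (if a i = j then (1:ℝ) else 0)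
        = g i j / J + softmax (θ i) j := by
    intro i j
    have hgij : g i j = (∑ a : ∀ i, Fin (n i),
        (∏ k, softmax (θ k) (a k)) * R a * (if a i = j then (1:ℝ) else 0))
          - softmax (θ i) j * J := by
      rw [hg i j]
      rw [Finset.sum_congr rfl (fun a (_ : a ∈ Finset.univ) => by
        show (∏ k, softmax (θ k) (a k)) * R a * ((if a i = j then (1:ℝ) else 0) - softmax (θ i) j)
          = (∏ k, softmax (θ k) (a k)) * R a * (if a i = j then (1:ℝ) else 0)
            - softmax (θ i) j * ((∏ k, softmax (θ k) (a k)) * R a)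
        ring), Finset.sum_sub_distrib, ← Finset.mul_sum]
      rfl
    have h2 : ∑ a : ∀ i, Fin (n i), q a * (if a i = j then (1:ℝ) else 0)
        = (∑ a : ∀ i, Fin (n i),
            (∏ k, softmax (θ k) (a k)) * R a * (if a i = j then (1:ℝ) else 0)) / J := by
      rw [Finset.sum_congr rfl (fun a (_ : a ∈ Finset.univ) => by
        show q a * (if a i = j then (1:ℝ) else 0)
          = ((∏ k, softmax (θ k) (a k)) * R a * (if a i = j then (1:ℝ) else 0)) / J
        rw [hq]
        ring), ← Finset.sum_div]
    rw [h2]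
    rw [eq_sub_iff_add_eq] at hgij
    rw [← hgij]
    field_simp
  -- expectation of the coordinate values
  have hcoord : ∀ i : Fin m, ∑ a : ∀ i, Fin (n i), q a * d i (a i)
      = ∑ j, (g i j / J + softmax (θ i) j) * d i j := by
    intro i
    have h1 : ∀ a : ∀ i, Fin (n i), q a * d i (a i)
        = ∑ j, (q a * (if a i = j then (1:ℝ) else 0)) * d i j := by
      intro a
      rw [Finset.sum_eq_single (a i)]
      · simp
      · intro j _ hj
        rw [if_neg (Ne.symm hj)]
        ring
      · intro h; exact absurd (Finset.mem_univ _) h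
    rw [Finset.sum_congr rfl (fun a _ => h1 a), Finset.sum_comm]
    refine Finset.sum_congr rfl (fun j _ => ?_)
    rw [← Finset.sum_mul, hQ i j]
  -- the expected log-ratio
  have hsum : ∑ a : ∀ i, Fin (n i), q a *
        (Real.log (∏ k, softmax ((θ + d) k) (a k)) - Real.log (∏ k, softmax (θ k) (a k)))
      = ∑ i, ((∑ j, (g i j / J + softmax (θ i) j) * d i j)
          - (Real.log (∑ k, Real.exp (θ i k + d i k))
              - Real.log (∑ k, Real.exp (θ i k)))) := by
    rw [Finset.sum_congr rfl (fun a (_ : a ∈ Finset.univ) => by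
      rw [hratio a, Finset.mul_sum]), Finset.sum_comm]
    refine Finset.sum_congr rfl (fun i _ => ?_)
    rw [Finset.sum_congr rfl (fun a (_ : a ∈ Finset.univ) =>
      mul_sub (q a) (d i (a i)) _), Finset.sum_sub_distrib, ← Finset.sum_mul,
      hq1, one_mul, hcoord i]
  -- per-coordinate lower bound
  have hβ : ∀ i : Fin m, ((∑ j, (g i j / J + softmax (θ i) j) * d i j)
        - (Real.log (∑ k, Real.exp (θ i k + d i k))
            - Real.log (∑ k, Real.exp (θ i k))))
      ≥ (∑ j, d i j * g i j) / J - (1/2) * ∑ j, (d i j) ^ 2 := by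
    intro i
    have h := lse_smooth (θ i) (d i)
    have hsplit : ∑ j, (g i j / J + softmax (θ i) j) * d i j
        = (∑ j, d i j * g i j) / J + ∑ j, softmax (θ i) j * d i j := by
      rw [Finset.sum_div, ← Finset.sum_add_distrib]
      refine Finset.sum_congr rfl (fun j _ => ?_)
      ring
    rw [hsplit]
    linarith
  -- put everything together
  have key := jensen hn R hR θ (θ + d)
  rw [hsum] at key
  have hfin : ∑ i, ((∑ j, (g i j / J + softmax (θ i) j) * d i j)
        - (Real.log (∑ k, Real.exp (θ i k + d i k))
            - Real.log (∑ k, Real.exp (θ i k))))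
      ≥ (1 / J) * (∑ i, ∑ j, d i j * g i j) - (1/2) * ∑ i, ∑ j, (d i j) ^ 2 := by
    calc ∑ i, ((∑ j, (g i j / J + softmax (θ i) j) * d i j)
          - (Real.log (∑ k, Real.exp (θ i k + d i k))
              - Real.log (∑ k, Real.exp (θ i k))))
        ≥ ∑ i, ((∑ j, d i j * g i j) / J - (1/2) * ∑ j, (d i j) ^ 2) :=
          Finset.sum_le_sum (fun i _ => hβ i)
      _ = (1 / J) * (∑ i, ∑ j, d i j * g i j) - (1/2) * ∑ i, ∑ j, (d i j) ^ 2 := by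
          rw [Finset.sum_sub_distrib, ← Finset.sum_div, ← Finset.mul_sum]
          ring
  linarith

end Stmt11Aux2


/-- Expected improvement lower bound, Theorem 1: let
`J(θ) = E_{a∼p_θ}[R(a)]` with `R > 0`, `p_θ` the product of independent
softmax-categorical distributions, and let `δ` be a random vector (on a finite
probability space `(Ω, w)`) with `E[δ] = g = ∇_θ J(θ)`. Then for any `ε > 0`,
`E[log J(θ + εδ)] − log J(θ) ≥ (ε/J(θ) − ε²/2)∥g∥² − (ε²/2)(E[∥δ∥²] − ∥g∥²)`. -/
theorem advantage_nas_stmt11 {m : ℕ} {n : Fin m → ℕ}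
    (R : (∀ i, Fin (n i)) → ℝ) (hR : ∀ a, 0 < R a)
    (θ : ∀ i, Fin (n i) → ℝ)
    {Ω : Type*} [Fintype Ω] (w : Ω → ℝ)
    (hw : ∀ ω, 0 ≤ w ω) (hws : (∑ ω, w ω) = 1)
    (δ : Ω → ∀ i, Fin (n i) → ℝ)
    (g : ∀ i, Fin (n i) → ℝ)
    -- `g` is the gradient of `J` at `θ` (componentwise partial derivatives)
    (hgrad : ∀ (i : Fin m) (j : Fin (n i)),
      HasDerivAt
        (fun t : ℝ =>
          expReward R (Function.update θ i (Function.update (θ i) j t)))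
        (g i j) (θ i j))
    -- `δ` is an unbiased estimator of the gradient: `E[δ] = g`
    (hunbiased : ∀ (i : Fin m) (j : Fin (n i)), (∑ ω, w ω * δ ω i j) = g i j)
    (ε : ℝ) (hε : 0 < ε) :
    (∑ ω, w ω * Real.log (expReward R (θ + ε • δ ω)))
        - Real.log (expReward R θ) ≥
      (ε / expReward R θ - ε ^ 2 / 2) * (∑ i, ∑ j, (g i j) ^ 2)
        - (ε ^ 2 / 2) *
          ((∑ ω, w ω * ∑ i, ∑ j, (δ ω i j) ^ 2) - ∑ i, ∑ j, (g i j) ^ 2) := by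

  by_cases hn : ∀ i, 0 < n i
  · -- all coordinates nondegenerate
    set J := expReward R θ with hJdef
    have hJ : 0 < J := Stmt11Aux2.expReward_pos hn R hR θ
    have hg : ∀ (i : Fin m) (j : Fin (n i)), g i j
        = ∑ a : ∀ i, Fin (n i), (∏ k, softmax (θ k) (a k)) * R a *
            ((if a i = j then (1:ℝ) else 0) - softmax (θ i) j) :=
      fun i j => Stmt11Aux2.grad_eq hn R θ g hgrad i j
    have hpt : ∀ ω, Real.log (expReward R (θ + ε • δ ω)) - Real.log J
        ≥ (ε / J) * (∑ i, ∑ j, δ ω i j * g i j)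
          - (ε ^ 2 / 2) * ∑ i, ∑ j, (δ ω i j) ^ 2 := by
      intro ω
      have h := Stmt11Aux2.pointwise hn R hR θ g hg (ε • δ ω)
      have e1 : ∑ i, ∑ j, (ε • δ ω) i j * g i j
          = ε * ∑ i, ∑ j, δ ω i j * g i j := by
        rw [Finset.mul_sum]
        refine Finset.sum_congr rfl (fun i _ => ?_)
        rw [Finset.mul_sum]
        refine Finset.sum_congr rfl (fun j _ => ?_)
        simp only [Pi.smul_apply, smul_eq_mul]
        ring
      have e2 : ∑ i, ∑ j, ((ε • δ ω) i j) ^ 2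
          = ε ^ 2 * ∑ i, ∑ j, (δ ω i j) ^ 2 := by
        rw [Finset.mul_sum]
        refine Finset.sum_congr rfl (fun i _ => ?_)
        rw [Finset.mul_sum]
        refine Finset.sum_congr rfl (fun j _ => ?_)
        simp only [Pi.smul_apply, smul_eq_mul]
        ring
      rw [e1, e2] at h
      have e3 : (1 / J) * (ε * ∑ i, ∑ j, δ ω i j * g i j)
            - (1/2) * (ε ^ 2 * ∑ i, ∑ j, (δ ω i j) ^ 2)
          = (ε / J) * (∑ i, ∑ j, δ ω i j * g i j)
            - (ε ^ 2 / 2) * ∑ i, ∑ j, (δ ω i j) ^ 2 := by ring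
      linarith [h, e3.ge, e3.le]
    have hineq : ∑ ω, w ω * (Real.log (expReward R (θ + ε • δ ω)) - Real.log J)
        ≥ ∑ ω, w ω * ((ε / J) * (∑ i, ∑ j, δ ω i j * g i j)
            - (ε ^ 2 / 2) * ∑ i, ∑ j, (δ ω i j) ^ 2) :=
      Finset.sum_le_sum (fun ω _ => mul_le_mul_of_nonneg_left (hpt ω) (hw ω))
    have hL : ∑ ω, w ω * (Real.log (expReward R (θ + ε • δ ω)) - Real.log J)
        = (∑ ω, w ω * Real.log (expReward R (θ + ε • δ ω))) - Real.log J := by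
      rw [Finset.sum_congr rfl (fun ω (_ : ω ∈ Finset.univ) =>
        mul_sub (w ω) _ (Real.log J)), Finset.sum_sub_distrib, ← Finset.sum_mul,
        hws, one_mul]
    have hS : ∑ ω, w ω * (∑ i, ∑ j, δ ω i j * g i j) = ∑ i, ∑ j, (g i j) ^ 2 := by
      have h1 : ∀ ω, w ω * (∑ i, ∑ j, δ ω i j * g i j)
          = ∑ i, ∑ j, (w ω * δ ω i j) * g i j := by
        intro ω
        rw [Finset.mul_sum]
        refine Finset.sum_congr rfl (fun i _ => ?_)
        rw [Finset.mul_sum]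
        refine Finset.sum_congr rfl (fun j _ => ?_)
        ring
      rw [Finset.sum_congr rfl (fun ω _ => h1 ω), Finset.sum_comm]
      refine Finset.sum_congr rfl (fun i _ => ?_)
      rw [Finset.sum_comm]
      refine Finset.sum_congr rfl (fun j _ => ?_)
      rw [← Finset.sum_mul, hunbiased i j, sq]
    have hRHS : ∑ ω, w ω * ((ε / J) * (∑ i, ∑ j, δ ω i j * g i j)
          - (ε ^ 2 / 2) * ∑ i, ∑ j, (δ ω i j) ^ 2)
        = (ε / J) * (∑ i, ∑ j, (g i j) ^ 2)
          - (ε ^ 2 / 2) * ∑ ω, w ω * ∑ i, ∑ j, (δ ω i j) ^ 2 := by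
      have h1 : ∀ ω, w ω * ((ε / J) * (∑ i, ∑ j, δ ω i j * g i j)
            - (ε ^ 2 / 2) * ∑ i, ∑ j, (δ ω i j) ^ 2)
          = (ε / J) * (w ω * (∑ i, ∑ j, δ ω i j * g i j))
            - (ε ^ 2 / 2) * (w ω * ∑ i, ∑ j, (δ ω i j) ^ 2) := by
        intro ω; ring
      rw [Finset.sum_congr rfl (fun ω _ => h1 ω), Finset.sum_sub_distrib,
        ← Finset.mul_sum, ← Finset.mul_sum, hS]
    rw [hL] at hineq
    rw [hRHS] at hineq
    have : (ε / J - ε ^ 2 / 2) * (∑ i, ∑ j, (g i j) ^ 2)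
          - (ε ^ 2 / 2) *
            ((∑ ω, w ω * ∑ i, ∑ j, (δ ω i j) ^ 2) - ∑ i, ∑ j, (g i j) ^ 2)
        = (ε / J) * (∑ i, ∑ j, (g i j) ^ 2)
          - (ε ^ 2 / 2) * ∑ ω, w ω * ∑ i, ∑ j, (δ ω i j) ^ 2 := by ring
    rw [this]
    exact hineq
  · -- some coordinate has an empty action set
    push_neg at hn
    obtain ⟨i₀, hi₀⟩ := hn
    have hi0 : n i₀ = 0 := Nat.le_zero.mp hi₀
    haveI : IsEmpty (∀ i, Fin (n i)) := ⟨fun a => (Fin.cast hi0 (a i₀)).elim0⟩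
    have hJ0 : ∀ ψ : ∀ i, Fin (n i) → ℝ, expReward R ψ = 0 := by
      intro ψ
      unfold expReward
      rw [Finset.univ_eq_empty, Finset.sum_empty]
    have hg0 : ∀ (i : Fin m) (j : Fin (n i)), g i j = 0 := by
      intro i j
      have h := hgrad i j
      have heq : (fun t : ℝ =>
          expReward R (Function.update θ i (Function.update (θ i) j t)))
          = fun _ => (0:ℝ) := funext (fun t => hJ0 _)
      rw [heq] at h
      exact h.unique (hasDerivAt_const _ 0)
    have hG2 : ∑ i, ∑ j, (g i j) ^ 2 = 0 := by
      refine Finset.sum_eq_zero (fun i _ => Finset.sum_eq_zero (fun j _ => ?_))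
      rw [hg0 i j]
      ring
    have hE : 0 ≤ ∑ ω, w ω * ∑ i, ∑ j, (δ ω i j) ^ 2 :=
      Finset.sum_nonneg (fun ω _ => mul_nonneg (hw ω)
        (Finset.sum_nonneg (fun i _ => Finset.sum_nonneg (fun j _ => sq_nonneg _))))
    simp only [hJ0, Real.log_zero, mul_zero, Finset.sum_const_zero, hG2, sub_zero,
      zero_sub, mul_zero]
    have hε2 : 0 ≤ ε ^ 2 / 2 := by positivity
    nlinarith [hE, hε2]
end

section
/- (Linear reward: variance of the advantage estimator) With linear reward R(a) = ∑_k r_kᵀ a_k and advantage A_i(a) = r_iᵀ a_i, the estimator δ_adv = A_i(a) (a_i − μ_i) for ∇_{θ_i} J satisfies E[∥δ_adv∥²] − ∥E[δ_adv]∥² = ∑_j μ_i^j (r_i^j)² (1 − 2μ_i^j + ∥μ_i∥²) − ∥∇_{θ_i} J∥²; in particular E[∥A_i(a)(a_i − μ_i)∥²] = ∑_j μ_i^j (r_i^j)² (1 − 2 μ_i^j + ∥μ_i∥²). -/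
open Finset

lemma oneHot_norm {n : ℕ} (μ : Fin n → ℝ) (hsum : (∑ j, μ j) = 1) (j : Fin n) :
    (∑ k, ((oneHot j - μ) k) ^ 2) = 1 - 2 * μ j + ∑ l, (μ l) ^ 2 := by
  have : ∀ k, ((oneHot j - μ) k) ^ 2
      = (oneHot j k) ^ 2 - 2 * oneHot j k * μ k + (μ k) ^ 2 := by
    intro k; simp [Pi.sub_apply]; ring
  simp only [this, Finset.sum_add_distrib, Finset.sum_sub_distrib]
  have h1 : (∑ k, (oneHot j k) ^ 2) = 1 := by
    simp [oneHot, apply_ite (· ^ (2:ℕ))]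
  have h2 : (∑ k, 2 * oneHot j k * μ k) = 2 * μ j := by
    simp [oneHot, ite_mul, mul_ite]
  rw [h1, h2]

lemma grad_eq {n : ℕ} (μ r : Fin n → ℝ) (k : Fin n) :
    (∑ j, μ j * (r j * ((oneHot j - μ) k))) = μ k * (r k - ∑ j, r j * μ j) := by
  have : ∀ j, μ j * (r j * ((oneHot j - μ) k))
      = μ j * r j * oneHot j k - μ j * r j * μ k := by
    intro j; simp [Pi.sub_apply]; ring
  simp only [this, Finset.sum_sub_distrib]
  have h1 : (∑ j, μ j * r j * oneHot j k) = μ k * r k := by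
    simp [oneHot, mul_ite]
  rw [h1, ← Finset.sum_mul]
  rw [mul_sub]
  congr 1
  rw [Finset.mul_sum, Finset.sum_mul]
  exact Finset.sum_congr rfl fun j _ => by ring

/-- Linear reward: variance of the advantage estimator: with
advantage `A_i(a) = r_iᵀ a_i` and one-hot `a_i` with `P(a_i = e_j) = μ_j`
(`μ` a strictly positive probability vector), the estimator
`δ_adv = A_i(a)(a_i − μ)` satisfies
`E[∥δ_adv∥²] = ∑_j μ_j r_j² (1 − 2μ_j + ∥μ∥²)` and hence
`Var[δ_adv] = E[∥δ_adv∥²] − ∥E[δ_adv]∥²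
            = ∑_j μ_j r_j² (1 − 2μ_j + ∥μ∥²) − ∥∇_{θ_i} J∥²`,
where `(∇_{θ_i} J)_k = μ_k (r_k − r ᵀ μ) = E[δ_adv]_k`. -/
theorem advantage_nas_stmt13 {n : ℕ} (μ r : Fin n → ℝ)
    (hμ : ∀ j, 0 < μ j) (hsum : (∑ j, μ j) = 1) :
    (∑ j, μ j * ∑ k, (r j * ((oneHot j - μ) k)) ^ 2)
      = (∑ j, μ j * (r j) ^ 2 * (1 - 2 * μ j + ∑ l, (μ l) ^ 2)) ∧
    (∑ j, μ j * ∑ k, (r j * ((oneHot j - μ) k)) ^ 2)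
        - (∑ k, (∑ j, μ j * (r j * ((oneHot j - μ) k))) ^ 2)
      = (∑ j, μ j * (r j) ^ 2 * (1 - 2 * μ j + ∑ l, (μ l) ^ 2))
        - (∑ k, (μ k * (r k - ∑ j, r j * μ j)) ^ 2) := by
  have h1 : (∑ j, μ j * ∑ k, (r j * ((oneHot j - μ) k)) ^ 2)
      = (∑ j, μ j * (r j) ^ 2 * (1 - 2 * μ j + ∑ l, (μ l) ^ 2)) := by
    refine Finset.sum_congr rfl fun j _ => ?_
    have : (∑ k, (r j * ((oneHot j - μ) k)) ^ 2)
        = (r j) ^ 2 * ∑ k, ((oneHot j - μ) k) ^ 2 := by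
      rw [Finset.mul_sum]; exact Finset.sum_congr rfl fun k _ => by ring
    rw [this, oneHot_norm μ hsum j]; ring
  refine ⟨h1, ?_⟩
  rw [h1]
  congr 1
  exact Finset.sum_congr rfl fun k _ => by rw [grad_eq]
end
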